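/- If E ⊆ ℝⁿ is α-thin at the point p for α ∈ (1, n], then there exists a ray emanating from p that avoids E within some small ball centered at p; i.e., there exist a unit vector v and r > 0 such that {p + tv : 0 < t < r} ∩ E = ∅. -/

import Mathlib

open MeasureTheory Metric Set Filter
open scoped ENNReal NNReal Topology

noncomputable section

/-- Euclidean n-space. -/
abbrev Euc (n : ℕ) := EuclideanSpace ℝ (Fin n)

/-- The Riesz potential `R^{α,Ω}_μ(x)`: for `α < n` it is `∫_Ω |x-y|^{α-n} dμ(y)`,
and for `α = n` (the remaining case `α ≤ n`) it is `∫_Ω log (D/|x-y|) dμ(y)`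
where `D = diam Ω`. -/
def rieszPotential (n : ℕ) (α : ℝ) (Ω : Set (Euc n)) (μ : Measure (Euc n)) (x : Euc n) :
    ℝ≥0∞ :=
  if α < n then ∫⁻ y in Ω, ENNReal.ofReal (‖x - y‖ ^ (α - (n : ℝ))) ∂μ
  else ∫⁻ y in Ω, ENNReal.ofReal (Real.log (Metric.diam Ω / ‖x - y‖)) ∂μ

/-- The Riesz capacity
`C^α_L(E,Ω) = inf { μ(Ω) : μ ≥ 0 a Radon measure on Ω, R^{α,Ω}_μ ≥ 1 on E }`. -/
def rieszCap (n : ℕ) (α : ℝ) (E Ω : Set (Euc n)) : ℝ≥0∞ :=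
  sInf {c | ∃ μ : Measure (Euc n),
    (∀ x ∈ E, 1 ≤ rieszPotential n α Ω μ x) ∧ c = μ Ω}

/-- The closed dyadic annulus `ω^δ_i(p) = {x : |x-p| ∈ [2^{-i} δ, 2^{-i+1} δ]}`. -/
def dyadicAnnulus (n : ℕ) (δ : ℝ) (i : ℕ) (p : Euc n) : Set (Euc n) :=
  {x | ‖x - p‖ ∈ Set.Icc ((2 : ℝ) ^ (-(i : ℤ)) * δ) ((2 : ℝ) ^ (-(i : ℤ) + 1) * δ)}

/-- The open dyadic annulus `Ω^δ_i(p) = {x : |x-p| ∈ (2^{-i-1} δ, 2^{-i+2} δ)}`. -/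
def dyadicAnnulusO (n : ℕ) (δ : ℝ) (i : ℕ) (p : Euc n) : Set (Euc n) :=
  {x | ‖x - p‖ ∈ Set.Ioo ((2 : ℝ) ^ (-(i : ℤ) - 1) * δ) ((2 : ℝ) ^ (-(i : ℤ) + 2) * δ)}

/-- `E` is `α`-thin at `p` with respect to the Riesz capacity: for `α ∈ (1, n)` this means
`Σ_{i≥1} C^α_L(E ∩ ω^δ_i(p), Ω^δ_i(p)) / C^α_L(∂B_{2^{-i}δ}(p), B_{2^{-i+1}δ}(p)) < ∞`
for some small `δ > 0`; for `α = n` it means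
`Σ_{i≥1} i · C^n_L(E ∩ ω^δ_i(p), Ω^δ_i(p)) < ∞` for some small `δ > 0`. -/
def RieszThinAt (n : ℕ) (α : ℝ) (E : Set (Euc n)) (p : Euc n) : Prop :=
  if α < n then
    ∃ δ > (0 : ℝ), ∑' i : ℕ,
      rieszCap n α (E ∩ dyadicAnnulus n δ (i + 1) p) (dyadicAnnulusO n δ (i + 1) p) /
        rieszCap n α (Metric.sphere p ((2 : ℝ) ^ (-(i : ℤ) - 1) * δ))
          (Metric.ball p ((2 : ℝ) ^ (-(i : ℤ)) * δ)) < ⊤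
  else
    ∃ δ > (0 : ℝ), ∑' i : ℕ,
      ((i + 1 : ℕ) : ℝ≥0∞) *
        rieszCap n n (E ∩ dyadicAnnulus n δ (i + 1) p) (dyadicAnnulusO n δ (i + 1) p) < ⊤

/-!
Directions are parametrised by the shell `1 < ‖x‖ < 2`. Call `x` bad at scale `r = δ / 2 ^ (i + 1)`
if the ray from `p` in direction `x / ‖x‖` meets `E` at distance in `[r, 2r]`. Take a measure `μ`
on the open annulus `Ω_i` whose potential is `≥ 1` on `E ∩ ω_i`. For a bad `x`, the kernel
`k(p + s x / ‖x‖, y)` is dominated by `C_r · dist(x, ℝ (y - p)) ^ e` with `e = α - n`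
(`e = -1/2` in the logarithmic case), and `e > 1 - n` because `α > 1`. Negative powers of the
distance to a line with such an exponent are integrable over a ball, uniformly in the line, so
Tonelli gives `|Bad_i| ≤ C_r K μ(Ω_i)`, hence `|Bad_i| ≤ C_r K cap_i`. A Dirac mass at `p` shows
that the capacity of the sphere of radius `r` is at most `r ^ (n - α)`, which cancels `C_r`, so
the thinness series dominates `∑ |Bad_i|`. Once the tail of this series is smaller than the
volume of the shell, some direction is bad at no scale below `r_N`, and its ray misses `E` on
`(0, r_N)`.
-/

open scoped RealInnerProductSpace

section LineGeometry

variable {F : Type*} [NormedAddCommGroup F] [InnerProductSpace ℝ F]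

lemma norm_sub_inner_smul_le_norm_sub_smul {w : F} (hw : ‖w‖ = 1) (x : F) (t : ℝ) :
    ‖x - ⟪x, w⟫ • w‖ ≤ ‖x - t • w‖ := by
  have key : ∀ c : ℝ, ‖x - c • w‖ ^ 2 = ‖x‖ ^ 2 - 2 * c * ⟪x, w⟫ + c ^ 2 := fun c => by
    rw [norm_sub_sq_real, real_inner_smul_right, norm_smul, hw, Real.norm_eq_abs, mul_one,
      sq_abs]
    ring
  rw [← pow_le_pow_iff_left₀ (norm_nonneg _) (norm_nonneg _) two_ne_zero, key, key]
  nlinarith [sq_nonneg (t - ⟪x, w⟫)]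

lemma sqrt_mul_mul_norm_sub_le_norm_smul_sub_smul {v w : F} (hv : ‖v‖ = 1) (hw : ‖w‖ = 1)
    {s t : ℝ} (hs : 0 ≤ s) (ht : 0 ≤ t) : √(s * t) * ‖v - w‖ ≤ ‖s • v - t • w‖ := by
  rw [← pow_le_pow_iff_left₀ (by positivity) (norm_nonneg _) two_ne_zero, mul_pow,
    Real.sq_sqrt (mul_nonneg hs ht), norm_sub_sq_real, norm_sub_sq_real, real_inner_smul_left,
    real_inner_smul_right, norm_smul, norm_smul, hv, hw, Real.norm_of_nonneg hs,
    Real.norm_of_nonneg ht]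
  nlinarith [sq_nonneg (s - t)]

lemma mul_norm_sub_inner_smul_le {x z : F} (hx : x ≠ 0) (hx2 : ‖x‖ ≤ 2) {r s : ℝ} (hr : 0 < r)
    (hs : r ≤ s) (hz : r / 2 ≤ ‖z‖) :
    r / 4 * ‖x - ⟪x, ‖z‖⁻¹ • z⟫ • ‖z‖⁻¹ • z‖ ≤ ‖s • ‖x‖⁻¹ • x - z‖ := by
  set v := ‖x‖⁻¹ • x
  set w := ‖z‖⁻¹ • z
  have hz0 : z ≠ 0 := norm_pos_iff.mp (by linarith)
  have hv : ‖v‖ = 1 := norm_smul_inv_norm hx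
  have hw : ‖w‖ = 1 := norm_smul_inv_norm hz0
  have hzw : z = ‖z‖ • w := (smul_inv_smul₀ (norm_ne_zero_iff.mpr hz0) z).symm
  have hdist : ‖x - ⟪x, w⟫ • w‖ ≤ 2 * ‖v - w‖ :=
    calc ‖x - ⟪x, w⟫ • w‖ ≤ ‖x - ‖x‖ • w‖ := norm_sub_inner_smul_le_norm_sub_smul hw x _
      _ = ‖x‖ * ‖v - w‖ := by
        rw [show x - ‖x‖ • w = ‖x‖ • (v - w) by
          rw [smul_sub, smul_inv_smul₀ (norm_ne_zero_iff.mpr hx)], norm_smul, norm_norm]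
      _ ≤ 2 * ‖v - w‖ := by gcongr
  have hsqrt : r / 2 ≤ √(s * ‖z‖) :=
    Real.le_sqrt_of_sq_le (by nlinarith)
  calc r / 4 * ‖x - ⟪x, w⟫ • w‖ ≤ r / 2 * ‖v - w‖ := by nlinarith
    _ ≤ √(s * ‖z‖) * ‖v - w‖ := by gcongr
    _ ≤ ‖s • v - ‖z‖ • w‖ :=
      sqrt_mul_mul_norm_sub_le_norm_smul_sub_smul hv hw (hr.le.trans hs) (norm_nonneg z)
    _ = ‖s • v - z‖ := by rw [← hzw]

end LineGeometry

lemma exists_mem_Ioc_div_two_pow {t c : ℝ} (ht : 0 < t) (htc : t ≤ c) :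
    ∃ k : ℕ, t ∈ Ioc (c / 2 ^ (k + 1)) (c / 2 ^ k) := by
  obtain ⟨k, hk, hk'⟩ := exists_nat_pow_near ((one_le_div ht).mpr htc) one_lt_two
  refine ⟨k, ?_, ?_⟩
  · rw [div_lt_iff₀ (by positivity), mul_comm]
    exact (div_lt_iff₀ ht).mp hk'
  · rw [le_div_iff₀ (by positivity), mul_comm]
    exact (le_div_iff₀ ht).mp hk

lemma rpow_div_two_pow_mul_pow (R e : ℝ) (hR : 0 < R) (k m : ℕ) :
    (R / 2 ^ (k + 1)) ^ e * (R / 2 ^ k) ^ m = 2 ^ (-e) * R ^ (e + m) * (2 ^ (-(e + m))) ^ k := by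
  have h2k : (0 : ℝ) < 2 ^ k := by positivity
  have hpow : ((2 : ℝ) ^ k) ^ (-(e + m)) = (2 ^ (-(e + m))) ^ k := by
    rw [← Real.rpow_natCast, ← Real.rpow_natCast, ← Real.rpow_mul zero_le_two,
      ← Real.rpow_mul zero_le_two, mul_comm]
  rw [← hpow, ← Real.rpow_natCast (R / 2 ^ k), pow_succ, mul_comm _ (2 : ℝ), ← div_div,
    Real.div_rpow (by positivity) h2k.le, Real.div_rpow hR.le zero_le_two,
    Real.div_rpow hR.le h2k.le, Real.rpow_add hR, Real.rpow_neg zero_le_two,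
    Real.rpow_neg h2k.le, Real.rpow_add h2k]
  field_simp

section DyadicLayers

variable {X : Type*} [MeasurableSpace X]

/-- The layers `R / 2 ^ (k + 1) < f ≤ R / 2 ^ k` turn the polynomial bound on sublevel sets into a
geometric series. -/
lemma setLIntegral_ofReal_rpow_le {μ : Measure X} {s : Set X} {f : X → ℝ} {R : ℝ}
    (hR : 0 < R) (hfR : ∀ x ∈ s, f x ≤ R) (hf0 : μ {x ∈ s | f x ≤ 0} = 0) {m : ℕ} {e : ℝ}
    (he : e ≤ 0) {A : ℝ≥0∞}
    (hA : ∀ ρ, 0 < ρ → ρ ≤ R → μ {x ∈ s | f x ≤ ρ} ≤ A * ENNReal.ofReal (ρ ^ m)) :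
    ∫⁻ x in s, ENNReal.ofReal (f x) ^ e ∂μ ≤
      A * ENNReal.ofReal (2 ^ (-e) * R ^ (e + m)) *
        (1 - ENNReal.ofReal (2 ^ (-(e + m))))⁻¹ := by
  set layer : ℕ → Set X := fun k => {x ∈ s | f x ∈ Ioc (R / 2 ^ (k + 1)) (R / 2 ^ k)}
  have hcover : s ⊆ {x ∈ s | f x ≤ 0} ∪ ⋃ k, layer k := by
    intro x hx
    rcases le_or_gt (f x) 0 with h | h
    · exact Or.inl ⟨hx, h⟩
    · obtain ⟨k, hk⟩ := exists_mem_Ioc_div_two_pow h (hfR x hx)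
      exact Or.inr (mem_iUnion.mpr ⟨k, hx, hk⟩)
  have hlayer : ∀ k, ∫⁻ x in layer k, ENNReal.ofReal (f x) ^ e ∂μ ≤
      A * ENNReal.ofReal (2 ^ (-e) * R ^ (e + m)) * ENNReal.ofReal (2 ^ (-(e + m))) ^ k := by
    intro k
    calc ∫⁻ x in layer k, ENNReal.ofReal (f x) ^ e ∂μ
        ≤ ∫⁻ _ in layer k, ENNReal.ofReal ((R / 2 ^ (k + 1)) ^ e) ∂μ := by
          refine setLIntegral_mono measurable_const fun x hx => ?_
          rw [ENNReal.ofReal_rpow_of_pos (hx.2.1.trans' (by positivity))]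
          exact ENNReal.ofReal_le_ofReal
            (Real.rpow_le_rpow_of_nonpos (by positivity) hx.2.1.le he)
      _ = ENNReal.ofReal ((R / 2 ^ (k + 1)) ^ e) * μ (layer k) := setLIntegral_const _ _
      _ ≤ ENNReal.ofReal ((R / 2 ^ (k + 1)) ^ e) * (A * ENNReal.ofReal ((R / 2 ^ k) ^ m)) := by
          gcongr
          refine (measure_mono fun x hx => ?_).trans
            (hA _ (by positivity) (div_le_self hR.le (one_le_pow₀ one_le_two)))
          exact ⟨hx.1, hx.2.2⟩
      _ = A * ENNReal.ofReal (2 ^ (-e) * R ^ (e + m)) * ENNReal.ofReal (2 ^ (-(e + m))) ^ k := by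
          rw [mul_left_comm, ← ENNReal.ofReal_mul (by positivity),
            rpow_div_two_pow_mul_pow R e hR, ENNReal.ofReal_mul (by positivity),
            ENNReal.ofReal_pow (by positivity), mul_assoc]
  calc ∫⁻ x in s, ENNReal.ofReal (f x) ^ e ∂μ
      ≤ ∫⁻ x in {x ∈ s | f x ≤ 0} ∪ ⋃ k, layer k, ENNReal.ofReal (f x) ^ e ∂μ :=
        lintegral_mono_set hcover
    _ ≤ ∫⁻ x in {x ∈ s | f x ≤ 0}, ENNReal.ofReal (f x) ^ e ∂μ +
          ∫⁻ x in ⋃ k, layer k, ENNReal.ofReal (f x) ^ e ∂μ := lintegral_union_le _ _ _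
    _ ≤ ∑' k, ∫⁻ x in layer k, ENNReal.ofReal (f x) ^ e ∂μ := by
        rw [setLIntegral_measure_zero _ _ hf0, zero_add]
        exact lintegral_iUnion_le _ _
    _ ≤ ∑' k, A * ENNReal.ofReal (2 ^ (-e) * R ^ (e + m)) *
          ENNReal.ofReal (2 ^ (-(e + m))) ^ k := ENNReal.tsum_le_tsum hlayer
    _ = _ := by rw [ENNReal.tsum_mul_left, ENNReal.tsum_geometric]

end DyadicLayers

lemma tube_subset_iUnion_closedBall {F : Type*} [NormedAddCommGroup F]
    [InnerProductSpace ℝ F] {w : F} (hw : ‖w‖ = 1) {ρ : ℝ} (hρ : 0 < ρ) :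
    {x ∈ closedBall (0 : F) 2 | ‖x - ⟪x, w⟫ • w‖ ≤ ρ} ⊆
      ⋃ j ∈ Finset.range (⌊4 / ρ⌋₊ + 1), closedBall ((-2 + j * ρ) • w) (2 * ρ) := by
  rintro x ⟨hx, hxw⟩
  set c := ⟪x, w⟫
  have hc : |c| ≤ 2 := by
    have := abs_real_inner_le_norm x w
    rw [hw, mul_one] at this
    exact this.trans (mem_closedBall_zero_iff.mp hx)
  have hc2 : 0 ≤ (c + 2) / ρ := div_nonneg (by linarith [neg_abs_le c]) hρ.le
  set j := ⌊(c + 2) / ρ⌋₊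
  have hj : j < ⌊4 / ρ⌋₊ + 1 :=
    Nat.lt_succ_of_le (Nat.floor_mono (by gcongr; linarith [le_abs_self c]))
  have hjc : |c - (-2 + j * ρ)| ≤ ρ := by
    have h1 : (j : ℝ) * ρ ≤ c + 2 := (le_div_iff₀ hρ).mp (Nat.floor_le hc2)
    have h2 : c + 2 < (j + 1) * ρ := (div_lt_iff₀ hρ).mp (Nat.lt_floor_add_one _)
    rw [abs_le]
    constructor <;> nlinarith
  simp only [mem_iUnion, Finset.mem_range, mem_closedBall, dist_eq_norm]
  refine ⟨j, hj, ?_⟩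
  calc ‖x - (-2 + j * ρ) • w‖ = ‖(x - c • w) + (c - (-2 + j * ρ)) • w‖ := by
        rw [sub_smul]; abel_nf
    _ ≤ ρ + ρ := by
        refine (norm_add_le _ _).trans (add_le_add hxw ?_)
        rwa [norm_smul, hw, mul_one, Real.norm_eq_abs]
    _ = 2 * ρ := by ring

section Tube

variable {n : ℕ}

lemma volume_tube_le (hn : n ≠ 0) {w : Euc n} (hw : ‖w‖ = 1) {ρ : ℝ} (hρ : 0 < ρ)
    (hρ4 : ρ ≤ 4) :
    volume {x ∈ closedBall (0 : Euc n) 2 | ‖x - ⟪x, w⟫ • w‖ ≤ ρ} ≤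
      ENNReal.ofReal (8 * 2 ^ n) * volume (ball (0 : Euc n) 1) * ENNReal.ofReal (ρ ^ (n - 1)) := by
  set M := ⌊4 / ρ⌋₊ + 1
  have hM : (M : ℝ) * ρ ≤ 8 := by
    have h1 : (⌊4 / ρ⌋₊ : ℝ) * ρ ≤ 4 := (le_div_iff₀ hρ).mp (Nat.floor_le (by positivity))
    push_cast [M]
    linarith
  have hpow : (M : ℝ) * (2 * ρ) ^ n ≤ 8 * 2 ^ n * ρ ^ (n - 1) := by
    obtain ⟨k, rfl⟩ : ∃ k, n = k + 1 := ⟨n - 1, by omega⟩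
    rw [Nat.add_sub_cancel, mul_pow, pow_succ, pow_succ]
    nlinarith [mul_le_mul_of_nonneg_right hM (by positivity : (0 : ℝ) ≤ 2 ^ k * 2 * ρ ^ k)]
  calc volume {x ∈ closedBall (0 : Euc n) 2 | ‖x - ⟪x, w⟫ • w‖ ≤ ρ}
      ≤ ∑ j ∈ Finset.range M, volume (closedBall (((-2 : ℝ) + j * ρ) • w) (2 * ρ)) :=
        (measure_mono (tube_subset_iUnion_closedBall hw hρ)).trans
          (measure_biUnion_finset_le _ _)
    _ = M * (ENNReal.ofReal ((2 * ρ) ^ n) * volume (ball (0 : Euc n) 1)) := by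
        simp_rw [Measure.addHaar_closedBall _ _ (by positivity : 0 ≤ 2 * ρ),
          finrank_euclideanSpace_fin, Finset.sum_const, Finset.card_range, nsmul_eq_mul]
    _ = ENNReal.ofReal (M * (2 * ρ) ^ n) * volume (ball (0 : Euc n) 1) := by
        rw [ENNReal.ofReal_mul (Nat.cast_nonneg _), ENNReal.ofReal_natCast, mul_assoc]
    _ ≤ ENNReal.ofReal (8 * 2 ^ n * ρ ^ (n - 1)) * volume (ball (0 : Euc n) 1) := by
        gcongr
    _ = ENNReal.ofReal (8 * 2 ^ n) * volume (ball (0 : Euc n) 1) *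
          ENNReal.ofReal (ρ ^ (n - 1)) := by
        rw [ENNReal.ofReal_mul (by positivity)]
        ring

lemma volume_setOf_dist_line_nonpos (hn : 2 ≤ n) {w : Euc n} (hw : ‖w‖ = 1) :
    volume {x : Euc n | ‖x - ⟪x, w⟫ • w‖ ≤ 0} = 0 := by
  have hspan : (ℝ ∙ w) ≠ ⊤ := by
    intro h
    have := congrArg (fun S : Submodule ℝ (Euc n) => Module.finrank ℝ S) h
    rw [finrank_span_singleton (norm_ne_zero_iff.mp (by simp [hw])), finrank_top,
      finrank_euclideanSpace_fin] at this
    omega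
  refine measure_mono_null (fun x hx => ?_) (Measure.addHaar_submodule volume _ hspan)
  have : x = ⟪x, w⟫ • w := sub_eq_zero.mp (norm_le_zero_iff.mp hx)
  rw [this]
  exact Submodule.smul_mem _ _ (Submodule.mem_span_singleton_self w)

lemma exists_setLIntegral_rpow_dist_line_le (hn : 2 ≤ n) {e : ℝ} (he : e ≤ 0)
    (hen : 1 - n < e) :
    ∃ K ≠ ⊤, ∀ w : Euc n, ‖w‖ = 1 →
      ∫⁻ x in closedBall (0 : Euc n) 2, ENNReal.ofReal ‖x - ⟪x, w⟫ • w‖ ^ e ≤ K := by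
  have hem : 0 < e + (n - 1 : ℕ) := by
    rw [Nat.cast_sub (by omega), Nat.cast_one]
    linarith
  refine ⟨_, ?_, fun w hw => setLIntegral_ofReal_rpow_le zero_lt_two (fun x hx => ?_)
    (measure_mono_null (fun x hx => hx.2) (volume_setOf_dist_line_nonpos hn hw)) he
    (fun ρ hρ hρ2 => volume_tube_le (by omega) hw hρ (by linarith))⟩
  · refine ENNReal.mul_ne_top (ENNReal.mul_ne_top (ENNReal.mul_ne_top ENNReal.ofReal_ne_top
      measure_ball_lt_top.ne) ENNReal.ofReal_ne_top) (ENNReal.inv_ne_top.mpr ?_)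
    refine (tsub_pos_of_lt ?_).ne'
    rw [← ENNReal.ofReal_one]
    exact ENNReal.ofReal_lt_ofReal_iff one_pos |>.mpr
      (Real.rpow_lt_one_of_one_lt_of_neg one_lt_two (by linarith))
  · calc ‖x - ⟪x, w⟫ • w‖ ≤ ‖x - (0 : ℝ) • w‖ := norm_sub_inner_smul_le_norm_sub_smul hw x 0
      _ ≤ 2 := by simpa using hx

end Tube

section BadDirections

variable {n : ℕ}

/-- A point `x` of the shell `1 < ‖x‖ < 2` stands for the direction `‖x‖⁻¹ • x`, so that Lebesgue
measure can weigh sets of directions. -/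
def badDirections (E : Set (Euc n)) (p : Euc n) (r : ℝ) : Set (Euc n) :=
  {x | ‖x‖ ∈ Ioo 1 2 ∧ ∃ s ∈ Icc r (2 * r), p + s • ‖x‖⁻¹ • x ∈ E}

lemma exists_ray_of_tsum_volume_badDirections_ne_top (hn : n ≠ 0) {E : Set (Euc n)}
    {p : Euc n} {δ : ℝ} (hδ : 0 < δ)
    (h : ∑' i, volume (badDirections E p (δ / 2 ^ (i + 1))) ≠ ⊤) :
    ∃ v : Euc n, ‖v‖ = 1 ∧ ∃ r > (0 : ℝ), ∀ t ∈ Ioo (0 : ℝ) r, p + t • v ∉ E := by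
  set shell : Set (Euc n) := {x | ‖x‖ ∈ Ioo 1 2}
  have hshell : 0 < volume shell := by
    have : NeZero n := ⟨hn⟩
    obtain ⟨x, hx⟩ := exists_norm_eq (Euc n) (by norm_num : (0 : ℝ) ≤ 3 / 2)
    exact (isOpen_Ioo.preimage continuous_norm).measure_pos _ ⟨x, by norm_num [shell, hx]⟩
  obtain ⟨N, hN⟩ : ∃ N, ∑' k, volume (badDirections E p (δ / 2 ^ (k + N + 1))) < volume shell :=
    ((ENNReal.tendsto_sum_nat_add _ h).eventually_lt_const hshell).exists
  obtain ⟨x, hx, hxN⟩ : ∃ x ∈ shell, ∀ k, x ∉ badDirections E p (δ / 2 ^ (k + N + 1)) := by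
    by_contra! hcover
    refine (measure_mono fun x hx => mem_iUnion.mpr (hcover x hx)).trans
      (measure_iUnion_le _) |>.not_gt hN
  have hx0 : x ≠ 0 := norm_pos_iff.mp (one_pos.trans hx.1)
  refine ⟨‖x‖⁻¹ • x, norm_smul_inv_norm hx0, δ / 2 ^ (N + 1), by positivity, fun t ht htE => ?_⟩
  obtain ⟨k, hk⟩ := exists_mem_Ioc_div_two_pow ht.1 ht.2.le
  have hr : δ / 2 ^ (N + 1) / 2 ^ (k + 1) = δ / 2 ^ (k + 1 + N + 1) := by
    rw [div_div, ← pow_add]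
    ring_nf
  refine hxN (k + 1) ⟨hx, t, ⟨?_, ?_⟩, htE⟩
  · rw [← hr]
    exact hk.1.le
  · have hr' : 2 * (δ / 2 ^ (k + 1 + N + 1)) = δ / 2 ^ (N + 1) / 2 ^ k := by
      rw [div_div, ← pow_add]
      field_simp
      ring
    rw [hr']
    exact hk.2

lemma volume_badDirections_le {E : Set (Euc n)} {p : Euc n} {r : ℝ} (hr : 0 < r)
    {Ω : Set (Euc n)} (hΩ : MeasurableSet Ω) (hΩp : ∀ y ∈ Ω, r / 2 ≤ ‖y - p‖)
    {μ : Measure (Euc n)} (hμ : μ Ω ≠ ⊤) {G : Euc n → Euc n → ℝ≥0∞}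
    (hE : ∀ z ∈ E, ‖z - p‖ ∈ Icc r (2 * r) → 1 ≤ ∫⁻ y in Ω, G z y ∂μ) {C : ℝ≥0∞} {e : ℝ}
    (hG : ∀ z y d, 0 ≤ d → r / 4 * d ≤ ‖z - y‖ → G z y ≤ C * ENNReal.ofReal d ^ e) {K : ℝ≥0∞}
    (hK : ∀ w : Euc n, ‖w‖ = 1 →
      ∫⁻ x in closedBall (0 : Euc n) 2, ENNReal.ofReal ‖x - ⟪x, w⟫ • w‖ ^ e ≤ K) :
    volume (badDirections E p r) ≤ C * K * μ Ω := by
  set u : Euc n → Euc n := fun y => ‖y - p‖⁻¹ • (y - p)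
  set H : Euc n → Euc n → ℝ≥0∞ := fun x y => C * ENNReal.ofReal ‖x - ⟪x, u y⟫ • u y‖ ^ e
  have hH : Measurable (Function.uncurry H) := by
    simp only [H, u, Function.uncurry_def]
    fun_prop
  have hu : ∀ y ∈ Ω, ‖u y‖ = 1 := fun y hy =>
    norm_smul_inv_norm (norm_pos_iff.mp (lt_of_lt_of_le (by positivity) (hΩp y hy)))
  have hbad : ∀ x ∈ badDirections E p r, 1 ≤ ∫⁻ y in Ω, H x y ∂μ := by
    rintro x ⟨hx, s, hs, hxE⟩
    have hx0 : x ≠ 0 := norm_pos_iff.mp (one_pos.trans hx.1)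
    have hv : ‖‖x‖⁻¹ • x‖ = 1 := norm_smul_inv_norm hx0
    have hzp : ‖p + s • ‖x‖⁻¹ • x - p‖ = s := by
      rw [add_sub_cancel_left, norm_smul, hv, mul_one, Real.norm_of_nonneg (hr.le.trans hs.1)]
    have hGH : ∀ y ∈ Ω, G (p + s • ‖x‖⁻¹ • x) y ≤ H x y := fun y hy => by
      refine hG _ _ _ (norm_nonneg _) ?_
      rw [show p + s • ‖x‖⁻¹ • x - y = s • ‖x‖⁻¹ • x - (y - p) by abel]
      exact mul_norm_sub_inner_smul_le hx0 hx.2.le hr hs.1 (hΩp y hy)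
    exact (hE _ hxE (by rwa [hzp])).trans (setLIntegral_mono' hΩ hGH)
  have : IsFiniteMeasure (μ.restrict Ω) := isFiniteMeasure_restrict.mpr hμ
  calc volume (badDirections E p r) = ∫⁻ _ in badDirections E p r, 1 := (setLIntegral_one _).symm
    _ ≤ ∫⁻ x in badDirections E p r, ∫⁻ y in Ω, H x y ∂μ :=
        setLIntegral_mono hH.lintegral_prod_right' hbad
    _ ≤ ∫⁻ x in closedBall (0 : Euc n) 2, ∫⁻ y in Ω, H x y ∂μ :=
        lintegral_mono_set fun x hx => mem_closedBall_zero_iff.mpr hx.1.2.le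
    _ = ∫⁻ y in Ω, (∫⁻ x in closedBall (0 : Euc n) 2, H x y) ∂μ :=
        lintegral_lintegral_swap hH.aemeasurable
    _ ≤ ∫⁻ _ in Ω, C * K ∂μ := by
        refine setLIntegral_mono' hΩ fun y hy => ?_
        calc ∫⁻ x in closedBall (0 : Euc n) 2, H x y
            = C * ∫⁻ x in closedBall (0 : Euc n) 2, ENNReal.ofReal ‖x - ⟪x, u y⟫ • u y‖ ^ e :=
              lintegral_const_mul _ (by fun_prop)
          _ ≤ C * K := by gcongr; exact hK _ (hu y hy)
    _ = C * K * μ Ω := setLIntegral_const _ _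

end BadDirections

section RieszKernel

variable {n : ℕ}

def rieszKernel (n : ℕ) (α : ℝ) (Ω : Set (Euc n)) (x y : Euc n) : ℝ≥0∞ :=
  if α < n then ENNReal.ofReal (‖x - y‖ ^ (α - (n : ℝ)))
  else ENNReal.ofReal (Real.log (diam Ω / ‖x - y‖))

lemma rieszPotential_eq_setLIntegral_rieszKernel (α : ℝ) (Ω : Set (Euc n))
    (μ : Measure (Euc n)) (x : Euc n) :
    rieszPotential n α Ω μ x = ∫⁻ y in Ω, rieszKernel n α Ω x y ∂μ := by
  unfold rieszPotential rieszKernel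
  split_ifs <;> rfl

lemma rieszKernel_le_of_lt {α : ℝ} (hα : α < n) {Ω : Set (Euc n)} {x y : Euc n} {c d : ℝ}
    (hc : 0 < c) (hd : 0 ≤ d) (h : c * d ≤ ‖x - y‖) :
    rieszKernel n α Ω x y ≤ ENNReal.ofReal (c ^ (α - n)) * ENNReal.ofReal d ^ (α - n) := by
  have he : α - n < 0 := by linarith
  rw [rieszKernel, if_pos hα]
  rcases hd.eq_or_lt with rfl | hd
  · simp [ENNReal.zero_rpow_of_neg he, ENNReal.mul_top, Real.rpow_pos_of_pos hc]
  · rw [ENNReal.ofReal_rpow_of_pos hd, ← ENNReal.ofReal_mul (by positivity),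
      ← Real.mul_rpow hc.le hd.le]
    exact ENNReal.ofReal_le_ofReal (Real.rpow_le_rpow_of_nonpos (by positivity) h he.le)

/-- In the logarithmic case the kernel is dominated through `log q ≤ 2 √q`. -/
lemma rieszKernel_le_of_not_lt {α : ℝ} (hα : ¬α < n) {Ω : Set (Euc n)} {x y : Euc n}
    {a c d : ℝ} (ha : 0 < a) (hc : 0 < c) (hd : 0 ≤ d) (hΩ : diam Ω ≤ a * c)
    (h : c * d ≤ ‖x - y‖) :
    rieszKernel n α Ω x y ≤
      ENNReal.ofReal (2 * a ^ (1 / 2 : ℝ)) * ENNReal.ofReal d ^ (-(1 / 2) : ℝ) := by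
  rw [rieszKernel, if_neg hα]
  rcases hd.eq_or_lt with rfl | hd
  · simp [ENNReal.zero_rpow_of_neg, ENNReal.mul_top, Real.rpow_pos_of_pos ha]
  rw [ENNReal.ofReal_rpow_of_pos hd, ← ENNReal.ofReal_mul (by positivity)]
  refine ENNReal.ofReal_le_ofReal ?_
  have hq : diam Ω / ‖x - y‖ ≤ a / d := by
    calc diam Ω / ‖x - y‖ ≤ a * c / (c * d) := div_le_div₀ (by positivity) hΩ (by positivity) h
      _ = a / d := by rw [mul_comm a c, mul_div_mul_left a d hc.ne']
  calc Real.log (diam Ω / ‖x - y‖) ≤ (diam Ω / ‖x - y‖) ^ (1 / 2 : ℝ) / (1 / 2) :=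
        Real.log_le_rpow_div (by positivity) (by norm_num)
    _ ≤ (a / d) ^ (1 / 2 : ℝ) / (1 / 2) := by gcongr
    _ = 2 * a ^ (1 / 2 : ℝ) * d ^ (-(1 / 2) : ℝ) := by
        rw [Real.div_rpow ha.le hd.le, Real.rpow_neg hd.le]
        ring

lemma rieszCap_sphere_le {α : ℝ} (hα : α < n) (p : Euc n) {r R : ℝ} (hr : 0 < r) (hR : 0 < R) :
    rieszCap n α (sphere p r) (ball p R) ≤ ENNReal.ofReal (r ^ ((n : ℝ) - α)) := by
  classical
  refine sInf_le ⟨ENNReal.ofReal (r ^ ((n : ℝ) - α)) • Measure.dirac p, fun x hx => ?_, ?_⟩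
  · rw [rieszPotential_eq_setLIntegral_rieszKernel, Measure.restrict_smul,
      lintegral_smul_measure, restrict_dirac' measurableSet_ball, if_pos (mem_ball_self hR)]
    simp only [rieszKernel, if_pos hα]
    rw [lintegral_dirac' _ (by fun_prop), ← dist_eq_norm, mem_sphere.mp hx, smul_eq_mul,
      ← ENNReal.ofReal_mul (by positivity), ← Real.rpow_add hr]
    simp
  · rw [Measure.smul_apply, smul_eq_mul, Measure.dirac_apply' _ measurableSet_ball,
      indicator_of_mem (mem_ball_self hR), Pi.one_apply, mul_one]

lemma volume_badDirections_le_mul_rieszCap {E S Ω : Set (Euc n)} {p : Euc n} {r α : ℝ}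
    (hr : 0 < r) (hΩ : MeasurableSet Ω) (hΩp : ∀ y ∈ Ω, r / 2 ≤ ‖y - p‖)
    (hS : rieszCap n α S Ω ≠ ⊤) (hES : ∀ z ∈ E, ‖z - p‖ ∈ Icc r (2 * r) → z ∈ S)
    {C : ℝ≥0∞} {e : ℝ} (hC : C ≠ ⊤)
    (hG : ∀ z y d, 0 ≤ d → r / 4 * d ≤ ‖z - y‖ →
      rieszKernel n α Ω z y ≤ C * ENNReal.ofReal d ^ e)
    {K : ℝ≥0∞} (hK_top : K ≠ ⊤)
    (hK : ∀ w : Euc n, ‖w‖ = 1 →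
      ∫⁻ x in closedBall (0 : Euc n) 2, ENNReal.ofReal ‖x - ⟪x, w⟫ • w‖ ^ e ≤ K) :
    volume (badDirections E p r) ≤ C * K * rieszCap n α S Ω := by
  have key : ∀ μ : Measure (Euc n), (∀ x ∈ S, 1 ≤ rieszPotential n α Ω μ x) → μ Ω ≠ ⊤ →
      volume (badDirections E p r) ≤ C * K * μ Ω := fun μ hμ hμΩ =>
    volume_badDirections_le hr hΩ hΩp hμΩ (fun z hz hzp => by
      rw [← rieszPotential_eq_setLIntegral_rieszKernel]
      exact hμ z (hES z hz hzp)) hG hK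
  rcases eq_or_ne (C * K) 0 with h0 | h0
  · obtain ⟨_, ⟨μ, hμ, rfl⟩, hμΩ⟩ := sInf_lt_iff.mp (lt_top_iff_ne_top.mpr hS)
    exact (key μ hμ hμΩ.ne).trans (by simp [h0])
  · rw [mul_comm, ← ENNReal.div_le_iff_le_mul (Or.inl h0) (Or.inl (ENNReal.mul_ne_top hC hK_top))]
    refine le_sInf ?_
    rintro _ ⟨μ, hμ, rfl⟩
    rcases eq_or_ne (μ Ω) ⊤ with h | h
    · exact h ▸ le_top
    · exact ENNReal.div_le_of_le_mul' (key μ hμ h)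

end RieszKernel

section DyadicAnnuli

variable {n : ℕ}

lemma two_zpow_neg_mul (k : ℕ) (δ : ℝ) : (2 : ℝ) ^ (-(k : ℤ)) * δ = δ / 2 ^ k := by
  rw [zpow_neg, zpow_natCast, inv_mul_eq_div]

lemma two_zpow_neg_add_mul (k : ℕ) (j : ℤ) (δ : ℝ) :
    (2 : ℝ) ^ (-(k : ℤ) + j) * δ = 2 ^ j * (δ / 2 ^ k) := by
  rw [zpow_add₀ two_ne_zero, mul_comm (_ ^ _) ((2 : ℝ) ^ j), mul_assoc, two_zpow_neg_mul]

lemma two_zpow_neg_sub_one_mul (i : ℕ) (δ : ℝ) :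
    (2 : ℝ) ^ (-(i : ℤ) - 1) * δ = δ / 2 ^ (i + 1) := by
  rw [show -(i : ℤ) - 1 = -((i + 1 : ℕ) : ℤ) by push_cast; ring, two_zpow_neg_mul]

lemma mem_dyadicAnnulus_succ {δ : ℝ} {i : ℕ} {p x : Euc n} :
    x ∈ dyadicAnnulus n δ (i + 1) p ↔
      ‖x - p‖ ∈ Icc (δ / 2 ^ (i + 1)) (2 * (δ / 2 ^ (i + 1))) := by
  rw [dyadicAnnulus, two_zpow_neg_mul, two_zpow_neg_add_mul, zpow_one]
  exact Iff.rfl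

lemma mem_dyadicAnnulusO_succ {δ : ℝ} {i : ℕ} {p x : Euc n} :
    x ∈ dyadicAnnulusO n δ (i + 1) p ↔
      ‖x - p‖ ∈ Ioo (δ / 2 ^ (i + 1) / 2) (4 * (δ / 2 ^ (i + 1))) := by
  rw [dyadicAnnulusO, sub_eq_add_neg, two_zpow_neg_add_mul, two_zpow_neg_add_mul,
    zpow_neg_one, inv_mul_eq_div]
  norm_num

lemma measurableSet_dyadicAnnulusO (δ : ℝ) (i : ℕ) (p : Euc n) :
    MeasurableSet (dyadicAnnulusO n δ i p) :=
  (isOpen_Ioo.preimage (by fun_prop : Continuous fun x : Euc n => ‖x - p‖)).measurableSet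

lemma diam_dyadicAnnulusO_succ_le {δ : ℝ} (hδ : 0 ≤ δ) (i : ℕ) (p : Euc n) :
    diam (dyadicAnnulusO n δ (i + 1) p) ≤ 8 * (δ / 2 ^ (i + 1)) := by
  have hsub : dyadicAnnulusO n δ (i + 1) p ⊆ closedBall p (4 * (δ / 2 ^ (i + 1))) :=
    fun y hy => mem_closedBall_iff_norm.mpr (mem_dyadicAnnulusO_succ.mp hy).2.le
  refine (diam_mono hsub isBounded_closedBall).trans ?_
  linarith [diam_closedBall (x := p) (by positivity : 0 ≤ 4 * (δ / 2 ^ (i + 1)))]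

end DyadicAnnuli

lemma ENNReal.tsum_ne_top_of_le_mul {f g : ℕ → ℝ≥0∞} {c : ℝ≥0∞} (hc : c ≠ ⊤)
    (hg : ∑' i, g i ≠ ⊤) (hfg : ∀ i, f i ≤ c * g i) : ∑' i, f i ≠ ⊤ :=
  ne_top_of_le_ne_top (ENNReal.mul_ne_top hc hg)
    ((ENNReal.tsum_le_tsum hfg).trans_eq ENNReal.tsum_mul_left)

section Thinness

variable {n : ℕ} {E : Set (Euc n)} {p : Euc n} {δ : ℝ}

lemma tsum_volume_badDirections_ne_top_of_lt (hn : 2 ≤ n) {α : ℝ} (hα : 1 < α) (hαn : α < n)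
    (hδ : 0 < δ)
    (hthin : ∑' i : ℕ,
      rieszCap n α (E ∩ dyadicAnnulus n δ (i + 1) p) (dyadicAnnulusO n δ (i + 1) p) /
        rieszCap n α (sphere p ((2 : ℝ) ^ (-(i : ℤ) - 1) * δ))
          (ball p ((2 : ℝ) ^ (-(i : ℤ)) * δ)) < ⊤) :
    ∑' i, volume (badDirections E p (δ / 2 ^ (i + 1))) ≠ ⊤ := by
  obtain ⟨K, hK_top, hK⟩ :=
    exists_setLIntegral_rpow_dist_line_le hn (e := α - n) (by linarith) (by linarith)
  refine ENNReal.tsum_ne_top_of_le_mul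
    (ENNReal.mul_ne_top (ENNReal.ofReal_ne_top (r := 4 ^ ((n : ℝ) - α))) hK_top) hthin.ne
    fun i => ?_
  set r := δ / 2 ^ (i + 1)
  set num := rieszCap n α (E ∩ dyadicAnnulus n δ (i + 1) p) (dyadicAnnulusO n δ (i + 1) p)
  set den := rieszCap n α (sphere p ((2 : ℝ) ^ (-(i : ℤ) - 1) * δ))
    (ball p ((2 : ℝ) ^ (-(i : ℤ)) * δ))
  have hden : den ≤ ENNReal.ofReal (r ^ ((n : ℝ) - α)) := by
    simp only [den, two_zpow_neg_sub_one_mul]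
    exact rieszCap_sphere_le hαn p (by positivity) (by positivity)
  have hnum : num ≠ ⊤ := by
    intro h
    refine ((ENNReal.le_tsum i).trans_lt hthin).ne (ENNReal.div_eq_top.mpr (Or.inr ⟨h, ?_⟩))
    exact ne_top_of_le_ne_top ENNReal.ofReal_ne_top hden
  have hr4 : ENNReal.ofReal ((r / 4) ^ (α - n)) =
      ENNReal.ofReal (4 ^ ((n : ℝ) - α)) * (ENNReal.ofReal (r ^ ((n : ℝ) - α)))⁻¹ := by
    rw [← ENNReal.ofReal_inv_of_pos (by positivity), ← ENNReal.ofReal_mul (by positivity),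
      ← neg_sub, Real.div_rpow (by positivity) (by norm_num), Real.rpow_neg (by positivity),
      Real.rpow_neg (by norm_num)]
    field_simp
  calc volume (badDirections E p r)
      ≤ ENNReal.ofReal ((r / 4) ^ (α - n)) * K * num :=
        volume_badDirections_le_mul_rieszCap (by positivity) (measurableSet_dyadicAnnulusO _ _ _)
          (fun y hy => (mem_dyadicAnnulusO_succ.mp hy).1.le) hnum
          (fun z hz hzp => ⟨hz, mem_dyadicAnnulus_succ.mpr hzp⟩) ENNReal.ofReal_ne_top
          (fun z y d hd h => rieszKernel_le_of_lt hαn (by positivity) hd h) hK_top hK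
    _ = ENNReal.ofReal (4 ^ ((n : ℝ) - α)) * K * (num / ENNReal.ofReal (r ^ ((n : ℝ) - α))) := by
        rw [hr4, div_eq_mul_inv]
        ring
    _ ≤ ENNReal.ofReal (4 ^ ((n : ℝ) - α)) * K * (num / den) := by gcongr

lemma tsum_volume_badDirections_ne_top_of_eq (hn : 2 ≤ n) (hδ : 0 < δ)
    (hthin : ∑' i : ℕ, ((i + 1 : ℕ) : ℝ≥0∞) *
      rieszCap n n (E ∩ dyadicAnnulus n δ (i + 1) p) (dyadicAnnulusO n δ (i + 1) p) < ⊤) :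
    ∑' i, volume (badDirections E p (δ / 2 ^ (i + 1))) ≠ ⊤ := by
  have hn' : (2 : ℝ) ≤ n := by exact_mod_cast hn
  obtain ⟨K, hK_top, hK⟩ :=
    exists_setLIntegral_rpow_dist_line_le hn (e := -(1 / 2)) (by norm_num) (by linarith)
  refine ENNReal.tsum_ne_top_of_le_mul
    (ENNReal.mul_ne_top (ENNReal.ofReal_ne_top (r := 2 * 32 ^ (1 / 2 : ℝ))) hK_top) hthin.ne
    fun i => ?_
  set r := δ / 2 ^ (i + 1)
  set num := rieszCap n n (E ∩ dyadicAnnulus n δ (i + 1) p) (dyadicAnnulusO n δ (i + 1) p)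
  have hnum_le : num ≤ ((i + 1 : ℕ) : ℝ≥0∞) * num :=
    le_mul_of_one_le_left' (by exact_mod_cast Nat.succ_pos i)
  have hnum : num ≠ ⊤ := (hnum_le.trans_lt ((ENNReal.le_tsum i).trans_lt hthin)).ne
  have hdiam : diam (dyadicAnnulusO n δ (i + 1) p) ≤ 32 * (r / 4) := by
    linarith [diam_dyadicAnnulusO_succ_le hδ.le i p]
  calc volume (badDirections E p r)
      ≤ ENNReal.ofReal (2 * 32 ^ (1 / 2 : ℝ)) * K * num :=
        volume_badDirections_le_mul_rieszCap (by positivity) (measurableSet_dyadicAnnulusO _ _ _)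
          (fun y hy => (mem_dyadicAnnulusO_succ.mp hy).1.le) hnum
          (fun z hz hzp => ⟨hz, mem_dyadicAnnulus_succ.mpr hzp⟩) ENNReal.ofReal_ne_top
          (fun z y d hd h =>
            rieszKernel_le_of_not_lt (lt_irrefl _) (by norm_num) (by positivity) hd hdiam h)
          hK_top hK
    _ ≤ ENNReal.ofReal (2 * 32 ^ (1 / 2 : ℝ)) * K * (((i + 1 : ℕ) : ℝ≥0∞) * num) := by gcongr

end Thinness

/-- if `E ⊆ ℝⁿ` is `α`-thin at `p` for `α ∈ (1, n]`, then some ray from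
`p` avoids `E` within a small ball at `p`: there are a unit vector `v` and `r > 0`
with `p + t v ∉ E` for all `t ∈ (0, r)`. -/
theorem ray_escaping_thin_set (n : ℕ) (α : ℝ) (hα₁ : 1 < α) (hα₂ : α ≤ n)
    (E : Set (Euc n)) (p : Euc n) (hthin : RieszThinAt n α E p) :
    ∃ v : Euc n, ‖v‖ = 1 ∧ ∃ r > (0 : ℝ), ∀ t ∈ Set.Ioo (0 : ℝ) r, p + t • v ∉ E := by
  have hn : 2 ≤ n := Nat.one_lt_cast.mp (hα₁.trans_le hα₂)
  unfold RieszThinAt at hthin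
  split_ifs at hthin with hαn
  · obtain ⟨δ, hδ, hsum⟩ := hthin
    exact exists_ray_of_tsum_volume_badDirections_ne_top (by omega) hδ
      (tsum_volume_badDirections_ne_top_of_lt hn hα₁ hαn hδ hsum)
  · obtain rfl : α = n := hα₂.antisymm (not_lt.mp hαn)
    obtain ⟨δ, hδ, hsum⟩ := hthin
    exact exists_ray_of_tsum_volume_badDirections_ne_top (by omega) hδ
      (tsum_volume_badDirections_ne_top_of_eq hn hδ hsum)
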